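/- Let Φ : ℝ^d → [0,∞) be an N_∞ function. Every sequence (u_n) in W^1L^Φ([0,T],ℝ^d) with sup_n ‖u_n‖_{W^1L^Φ} < ∞ has a subsequence that converges uniformly on [0,T] to some continuous function u : [0,T] → ℝ^d. -/

import Mathlib

open MeasureTheory Filter Set
open scoped ENNReal RealInnerProductSpace Topology

noncomputable section

/-- `ℝ^d` with the euclidean norm. -/
abbrev Ed (d : ℕ) : Type := EuclideanSpace ℝ (Fin d)

/-- `Φ` is an `N_∞` function: differentiable, convex, nonnegative, vanishing exactly at `0`,
even, and superlinear at infinity. -/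
def IsNInf {m : ℕ} (Φ : Ed m → ℝ) : Prop :=
  Differentiable ℝ Φ ∧ ConvexOn ℝ Set.univ Φ ∧ (∀ y, 0 ≤ Φ y) ∧ Φ 0 = 0 ∧
    (∀ y, y ≠ 0 → 0 < Φ y) ∧ (∀ y, Φ (-y) = Φ y) ∧
    Tendsto (fun y => Φ y / ‖y‖) (comap (fun y : Ed m => ‖y‖) atTop) atTop

variable {d : ℕ}

/-- The modular `ρ_Φ(u) = ∫_0^T Φ(u(t)) dt`, as an extended nonnegative real. -/
def rhoE (T : ℝ) (Φ : Ed d → ℝ) (u : ℝ → Ed d) : ℝ≥0∞ :=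
  ∫⁻ t in Icc (0:ℝ) T, ENNReal.ofReal (Φ (u t))

/-- `u ∈ L^Φ([0,T], ℝ^d)`. -/
def MemLphi (T : ℝ) (Φ : Ed d → ℝ) (u : ℝ → Ed d) : Prop :=
  AEMeasurable u (volume.restrict (Icc (0:ℝ) T)) ∧
    ∃ l : ℝ, 0 < l ∧ rhoE T Φ (fun t => l • u t) < ⊤

/-- The Luxemburg norm of `u` on `[0,T]`. -/
def luxNorm (T : ℝ) (Φ : Ed d → ℝ) (u : ℝ → Ed d) : ℝ :=
  sInf {l : ℝ | 0 < l ∧ rhoE T Φ (fun t => l⁻¹ • u t) ≤ 1}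

/-- `u ∈ W^1L^Φ([0,T], ℝ^d)` with a.e. derivative `u'` : `u` is absolutely continuous,
being the integral of the (integrable) function `u'`, and `u' ∈ L^Φ`. -/
def MemW1Lphi (T : ℝ) (Φ : Ed d → ℝ) (u u' : ℝ → Ed d) : Prop :=
  IntegrableOn u' (Icc (0:ℝ) T) ∧ MemLphi T Φ u' ∧
    ∀ t ∈ Icc (0:ℝ) T, u t = u 0 + ∫ s in (0:ℝ)..t, u' s

/-!
Superlinearity of `Φ` gives, for every `ε > 0`, an `R` with `‖y‖ ≤ R + ε Φ(y)`. If
`‖v‖_{L^Φ} < B` then `∫ Φ(v/B) ≤ 1`, hence `∫_S ‖v‖ ≤ B R |S| + B ε` for every `S ⊆ [0,T]`: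
a Luxemburg ball is uniformly integrable. Applied to the derivatives `u'ₙ`, this makes the
`uₙ = uₙ(0) + ∫ u'ₙ` equicontinuous; applied to the `uₙ` themselves (with `ε = 1`) it bounds
their averages, hence the `uₙ` are uniformly bounded. Arzelà–Ascoli concludes.
-/

open scoped BoundedContinuousFunction Interval

theorem ConvexOn.map_smul_le_mul {E : Type*} [AddCommGroup E] [Module ℝ E] {Φ : E → ℝ}
    (hconv : ConvexOn ℝ univ Φ) (h0 : Φ 0 = 0) {a : ℝ} (ha0 : 0 ≤ a) (ha1 : a ≤ 1) (y : E) :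
    Φ (a • y) ≤ a * Φ y := by
  simpa [h0] using hconv.2 (mem_univ y) (mem_univ 0) ha0 (sub_nonneg.mpr ha1) (by ring)

theorem exists_norm_le_add_mul_of_superlinear {E : Type*} [NormedAddCommGroup E] {Φ : E → ℝ}
    (hpos : ∀ y, 0 ≤ Φ y)
    (hsuper : Tendsto (fun y => Φ y / ‖y‖) (comap (fun y : E => ‖y‖) atTop) atTop)
    {ε : ℝ} (hε : 0 < ε) : ∃ R, 0 ≤ R ∧ ∀ y, ‖y‖ ≤ R + ε * Φ y := by
  obtain ⟨R, hR⟩ := eventually_atTop.mp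
    (eventually_comap.mp (hsuper.eventually (eventually_ge_atTop ε⁻¹)))
  refine ⟨max R 1, by positivity, fun y => ?_⟩
  rcases lt_or_ge ‖y‖ (max R 1) with hy | hy
  · nlinarith [hpos y]
  · have hy0 : 0 < ‖y‖ := zero_lt_one.trans_le ((le_max_right _ _).trans hy)
    have := hR ‖y‖ ((le_max_left _ _).trans hy) y rfl
    rw [inv_le_iff_one_le_mul₀ hε, div_mul_eq_mul_div, one_le_div hy0] at this
    linarith [le_max_right R 1]

theorem exists_subseq_tendstoUniformlyOn_of_equicontinuousOn {X E : Type*} [TopologicalSpace X]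
    [NormedAddCommGroup E] [ProperSpace E] {K : Set X} (hK : IsCompact K) {f : ℕ → X → E}
    (hequi : EquicontinuousOn f K) {M : ℝ} (hbdd : ∀ n, ∀ x ∈ K, ‖f n x‖ ≤ M) :
    ∃ φ : ℕ → ℕ, StrictMono φ ∧ ∃ g : X → E, ContinuousOn g K ∧
      TendstoUniformlyOn (fun k => f (φ k)) g atTop K := by
  have : CompactSpace K := isCompact_iff_compactSpace.mp hK
  have hrestr := (equicontinuous_restrict_iff f).mpr hequi
  let F (n : ℕ) : K →ᵇ E :=
    BoundedContinuousFunction.mkOfCompact ⟨K.domRestrict (f n), hrestr.continuous n⟩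
  have hcpt : IsCompact (closure (range F)) := by
    refine BoundedContinuousFunction.arzela_ascoli (Metric.closedBall 0 M)
      (isCompact_closedBall 0 M) _ ?_ ?_
    · rintro _ x ⟨n, rfl⟩
      exact mem_closedBall_zero_iff.mpr (hbdd n x x.2)
    · intro x U hU
      filter_upwards [hrestr x U hU] with y hy
      rintro ⟨_, n, rfl⟩
      exact hy n
  obtain ⟨g, -, φ, hφ, hlim⟩ := hcpt.tendsto_subseq fun n => subset_closure (mem_range_self n)
  have hext : K.domRestrict (Function.extend Subtype.val g 0) = g :=
    funext fun x => Subtype.val_injective.extend_apply _ _ x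
  refine ⟨φ, hφ, Function.extend Subtype.val g 0, ?_, ?_⟩
  · rw [continuousOn_iff_continuous_domRestrict, hext]
    exact g.continuous
  · rw [tendstoUniformlyOn_iff_tendstoUniformly_comp_coe,
      show Function.extend Subtype.val g 0 ∘ Subtype.val = ⇑g from hext]
    exact BoundedContinuousFunction.tendsto_iff_tendstoUniformly.mp hlim

theorem norm_le_of_setIntegral_norm_le {E : Type*} [NormedAddCommGroup E] {f : ℝ → E}
    {a b M N : ℝ} (hab : a < b) (hf : IntegrableOn f (Icc a b))
    (hN : ∫ s in Icc a b, ‖f s‖ ≤ N) (hM : ∀ s ∈ Icc a b, ∀ t ∈ Icc a b, ‖f t - f s‖ ≤ M)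
    {t : ℝ} (ht : t ∈ Icc a b) : ‖f t‖ ≤ N / (b - a) + M := by
  obtain ⟨s, hs, hfs⟩ := exists_le_setAverage (f := fun s => ‖f s‖) (by simp [hab])
    measure_Icc_lt_top.ne hf.norm
  rw [setAverage_eq, Real.volume_real_Icc_of_le hab.le, smul_eq_mul, inv_mul_eq_div] at hfs
  calc ‖f t‖ ≤ ‖f s‖ + ‖f t - f s‖ := norm_le_insert' _ _
    _ ≤ N / (b - a) + M := by
      gcongr
      · exact hfs.trans (div_le_div_of_nonneg_right hN (sub_pos.mpr hab).le)
      · exact hM s hs t ht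

section Modular

variable {T : ℝ} {Φ : Ed d → ℝ}

theorem rhoE_smul_le (hconv : ConvexOn ℝ univ Φ) (h0 : Φ 0 = 0) {a : ℝ} (ha0 : 0 ≤ a)
    (ha1 : a ≤ 1) (w : ℝ → Ed d) :
    rhoE T Φ (fun t => a • w t) ≤ ENNReal.ofReal a * rhoE T Φ w := by
  rw [rhoE, rhoE, ← lintegral_const_mul' _ _ ENNReal.ofReal_ne_top]
  refine lintegral_mono fun t => ?_
  rw [← ENNReal.ofReal_mul ha0]
  exact ENNReal.ofReal_le_ofReal (hconv.map_smul_le_mul h0 ha0 ha1 _)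

theorem rhoE_lt_top_of_continuousOn (hΦc : Continuous Φ) {v : ℝ → Ed d}
    (hv : ContinuousOn v (Icc 0 T)) : rhoE T Φ v < ⊤ :=
  ((hΦc.comp_continuousOn hv).integrableOn_compact isCompact_Icc).lintegral_lt_top

theorem luxNorm_nonneg (v : ℝ → Ed d) : 0 ≤ luxNorm T Φ v :=
  Real.sInf_nonneg fun _ hl => hl.1.le

theorem rhoE_inv_smul_le_one_of_luxNorm_lt (hconv : ConvexOn ℝ univ Φ) (h0 : Φ 0 = 0)
    {v : ℝ → Ed d} (hv : ∃ l : ℝ, 0 < l ∧ rhoE T Φ (fun t => l • v t) < ⊤) {B : ℝ}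
    (hB : luxNorm T Φ v < B) : rhoE T Φ (fun t => B⁻¹ • v t) ≤ 1 := by
  obtain ⟨l₀, hl₀, hfin⟩ := hv
  set A := (rhoE T Φ (fun t => l₀ • v t)).toReal
  have hA : 0 ≤ A := ENNReal.toReal_nonneg
  -- `luxNorm` is `sInf ∅ = 0` when no scaling is admissible, so this set must be inhabited.
  have hne : {l : ℝ | 0 < l ∧ rhoE T Φ (fun t => l⁻¹ • v t) ≤ 1}.Nonempty := by
    refine ⟨((A + 1)⁻¹ * l₀)⁻¹, by positivity, ?_⟩
    calc rhoE T Φ (fun t => ((A + 1)⁻¹ * l₀)⁻¹⁻¹ • v t)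
        = rhoE T Φ (fun t => (A + 1)⁻¹ • l₀ • v t) := by simp only [inv_inv, smul_smul]
      _ ≤ ENNReal.ofReal (A + 1)⁻¹ * ENNReal.ofReal A := by
        rw [ENNReal.ofReal_toReal hfin.ne]
        exact rhoE_smul_le hconv h0 (by positivity) (inv_le_one_of_one_le₀ (by linarith)) _
      _ ≤ 1 := by
        rw [← ENNReal.ofReal_mul (by positivity), ENNReal.ofReal_le_one,
          inv_mul_le_iff₀ (by positivity)]
        linarith
  obtain ⟨l, ⟨hl0, hl1⟩, hlB⟩ := exists_lt_of_csInf_lt hne hB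
  have hB0 : 0 < B := hl0.trans hlB
  calc rhoE T Φ (fun t => B⁻¹ • v t) = rhoE T Φ (fun t => (l / B) • l⁻¹ • v t) := by
        simp only [smul_smul, div_mul_eq_mul_div, mul_inv_cancel₀ hl0.ne', one_div]
    _ ≤ ENNReal.ofReal (l / B) * 1 :=
        (rhoE_smul_le hconv h0 (by positivity) ((div_le_one hB0).mpr hlB.le) _).trans
          (by gcongr)
    _ ≤ 1 := by
        rw [mul_one, ENNReal.ofReal_le_one]
        exact (div_le_one hB0).mpr hlB.le

theorem integrableOn_of_rhoE_ne_top (hΦc : Continuous Φ) (hpos : ∀ y, 0 ≤ Φ y) {w : ℝ → Ed d}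
    (hw : AEStronglyMeasurable w (volume.restrict (Icc 0 T))) (hρ : rhoE T Φ w ≠ ⊤) :
    IntegrableOn (fun t => Φ (w t)) (Icc 0 T) :=
  ⟨hΦc.comp_aestronglyMeasurable hw,
    (hasFiniteIntegral_iff_ofReal (ae_of_all _ fun _ => hpos _)).mpr hρ.lt_top⟩

theorem integral_eq_toReal_rhoE (hΦc : Continuous Φ) (hpos : ∀ y, 0 ≤ Φ y) {w : ℝ → Ed d}
    (hw : AEStronglyMeasurable w (volume.restrict (Icc 0 T))) :
    ∫ t in Icc 0 T, Φ (w t) = (rhoE T Φ w).toReal :=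
  integral_eq_lintegral_of_nonneg_ae (ae_of_all _ fun _ => hpos _)
    (hΦc.comp_aestronglyMeasurable hw)

theorem setIntegral_norm_le_of_rhoE_le_one (hΦc : Continuous Φ) (hpos : ∀ y, 0 ≤ Φ y)
    {ε R B : ℝ} (hε : 0 ≤ ε) (hB : 0 < B) (hR : ∀ y, ‖y‖ ≤ R + ε * Φ y) {v : ℝ → Ed d}
    (hv : IntegrableOn v (Icc 0 T)) (hmod : rhoE T Φ (fun t => B⁻¹ • v t) ≤ 1)
    {S : Set ℝ} (hS : S ⊆ Icc 0 T) :
    ∫ τ in S, ‖v τ‖ ≤ B * R * volume.real S + B * ε := by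
  have hw : AEStronglyMeasurable (fun t => B⁻¹ • v t) (volume.restrict (Icc 0 T)) :=
    hv.aestronglyMeasurable.const_smul B⁻¹
  have hΦw := integrableOn_of_rhoE_ne_top hΦc hpos hw (hmod.trans_lt ENNReal.one_lt_top).ne
  have hΦS : ∫ τ in S, Φ (B⁻¹ • v τ) ≤ 1 :=
    calc ∫ τ in S, Φ (B⁻¹ • v τ) ≤ ∫ τ in Icc 0 T, Φ (B⁻¹ • v τ) :=
          setIntegral_mono_set hΦw (ae_of_all _ fun _ => hpos _) hS.eventuallyLE
      _ = (rhoE T Φ (fun t => B⁻¹ • v t)).toReal := integral_eq_toReal_rhoE hΦc hpos hw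
      _ ≤ 1 := ENNReal.toReal_le_of_le_ofReal zero_le_one (by rwa [ENNReal.ofReal_one])
  have hpt : ∀ τ, ‖v τ‖ ≤ B * R + B * ε * Φ (B⁻¹ • v τ) := fun τ => by
    have := hR (B⁻¹ • v τ)
    rw [norm_smul, Real.norm_of_nonneg (inv_nonneg.mpr hB.le), inv_mul_le_iff₀ hB] at this
    linarith
  have hconst : IntegrableOn (fun _ => B * R) S :=
    integrableOn_const ((measure_mono hS).trans_lt measure_Icc_lt_top).ne
  calc ∫ τ in S, ‖v τ‖ ≤ ∫ τ in S, (B * R + B * ε * Φ (B⁻¹ • v τ)) :=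
        setIntegral_mono (hv.mono_set hS).norm (hconst.add ((hΦw.mono_set hS).const_mul _)) hpt
    _ = B * R * volume.real S + B * ε * ∫ τ in S, Φ (B⁻¹ • v τ) := by
        rw [integral_add hconst ((hΦw.mono_set hS).const_mul _), setIntegral_const,
          integral_const_mul, smul_eq_mul, mul_comm (volume.real S)]
    _ ≤ B * R * volume.real S + B * ε := by
        linarith [mul_le_of_le_one_right (show 0 ≤ B * ε by positivity) hΦS]

theorem exists_pos_forall_setIntegral_norm_lt (hΦc : Continuous Φ) (hpos : ∀ y, 0 ≤ Φ y)
    (hsuper : Tendsto (fun y => Φ y / ‖y‖) (comap (fun y : Ed d => ‖y‖) atTop) atTop)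
    {B : ℝ} (hB : 0 < B) {ε : ℝ} (hε : 0 < ε) :
    ∃ δ > 0, ∀ v : ℝ → Ed d, IntegrableOn v (Icc 0 T) →
      rhoE T Φ (fun t => B⁻¹ • v t) ≤ 1 →
      ∀ S ⊆ Icc 0 T, volume.real S < δ → ∫ τ in S, ‖v τ‖ < ε := by
  obtain ⟨R, hR0, hR⟩ := exists_norm_le_add_mul_of_superlinear hpos hsuper
    (show 0 < ε / (2 * B) by positivity)
  refine ⟨ε / (2 * (B * R + 1)), by positivity, fun v hv hmod S hS hSδ => ?_⟩
  have hBR : 0 < B * R + 1 := by positivity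
  calc ∫ τ in S, ‖v τ‖ ≤ B * R * volume.real S + B * (ε / (2 * B)) :=
        setIntegral_norm_le_of_rhoE_le_one hΦc hpos (by positivity) hB hR hv hmod hS
    _ ≤ (B * R + 1) * volume.real S + ε / 2 := by
        gcongr
        · linarith
        · exact le_of_eq (by field_simp)
    _ < (B * R + 1) * (ε / (2 * (B * R + 1))) + ε / 2 := by gcongr
    _ = ε := by field_simp; ring

end Modular

namespace MemW1Lphi

variable {T : ℝ} {Φ : Ed d → ℝ} {u u' : ℝ → Ed d}

theorem continuousOn (hu : MemW1Lphi T Φ u u') : ContinuousOn u (Icc 0 T) :=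
  (continuousOn_const.add (intervalIntegral.continuousOn_primitive hu.1)).congr fun t ht => by
    rw [hu.2.2 t ht, intervalIntegral.integral_of_le ht.1]
    rfl

theorem norm_sub_le_setIntegral_uIoc (hu : MemW1Lphi T Φ u u') {s t : ℝ}
    (hs : s ∈ Icc 0 T) (ht : t ∈ Icc 0 T) : ‖u t - u s‖ ≤ ∫ τ in Ι s t, ‖u' τ‖ := by
  have hint : ∀ r ∈ Icc 0 T, IntervalIntegrable u' volume 0 r := fun r hr =>
    (hu.1.mono_set (uIcc_subset_Icc (left_mem_Icc.mpr (hr.1.trans hr.2)) hr)).intervalIntegrable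
  rw [hu.2.2 t ht, hu.2.2 s hs, add_sub_add_left_eq_sub,
    intervalIntegral.integral_interval_sub_left (hint t ht) (hint s hs)]
  exact intervalIntegral.norm_integral_le_integral_norm_uIoc

end MemW1Lphi

section Family

variable {T : ℝ} {Φ : Ed d → ℝ} {u u' : ℕ → ℝ → Ed d}

theorem equicontinuousOn_of_memW1Lphi (hΦc : Continuous Φ) (hpos : ∀ y, 0 ≤ Φ y)
    (hsuper : Tendsto (fun y => Φ y / ‖y‖) (comap (fun y : Ed d => ‖y‖) atTop) atTop)
    {B : ℝ} (hB : 0 < B) (hu : ∀ n, MemW1Lphi T Φ (u n) (u' n))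
    (hmod' : ∀ n, rhoE T Φ (fun t => B⁻¹ • u' n t) ≤ 1) : EquicontinuousOn u (Icc 0 T) := by
  refine ((uniformEquicontinuous_restrict_iff u).mp
    (Metric.uniformEquicontinuous_iff.mpr fun ε hε => ?_)).equicontinuousOn
  obtain ⟨δ, hδ, hint⟩ := exists_pos_forall_setIntegral_norm_lt (T := T) hΦc hpos hsuper hB hε
  refine ⟨δ, hδ, fun s t hst n => ?_⟩
  have hvol : volume.real (Ι (s : ℝ) t) = dist s t := by
    rw [measureReal_def, Real.volume_uIoc, ENNReal.toReal_ofReal (abs_nonneg _),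
      Subtype.dist_eq, Real.dist_eq, abs_sub_comm]
  calc dist (u n s) (u n t) = ‖u n t - u n s‖ := dist_comm _ _ |>.trans (dist_eq_norm _ _)
    _ ≤ ∫ τ in Ι (s : ℝ) t, ‖u' n τ‖ := (hu n).norm_sub_le_setIntegral_uIoc s.2 t.2
    _ < ε := hint _ (hu n).1 (hmod' n) _ (uIoc_subset_uIcc.trans (uIcc_subset_Icc s.2 t.2))
        (hvol ▸ hst)

theorem exists_norm_le_of_memW1Lphi (hT : 0 < T) (hΦc : Continuous Φ) (hpos : ∀ y, 0 ≤ Φ y)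
    (hsuper : Tendsto (fun y => Φ y / ‖y‖) (comap (fun y : Ed d => ‖y‖) atTop) atTop)
    {B : ℝ} (hB : 0 < B) (hu : ∀ n, MemW1Lphi T Φ (u n) (u' n))
    (hmod : ∀ n, rhoE T Φ (fun t => B⁻¹ • u n t) ≤ 1)
    (hmod' : ∀ n, rhoE T Φ (fun t => B⁻¹ • u' n t) ≤ 1) :
    ∃ M, ∀ n, ∀ t ∈ Icc 0 T, ‖u n t‖ ≤ M := by
  obtain ⟨R, hR0, hR⟩ := exists_norm_le_add_mul_of_superlinear hpos hsuper one_pos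
  have hint : ∀ v : ℝ → Ed d, IntegrableOn v (Icc 0 T) → rhoE T Φ (fun t => B⁻¹ • v t) ≤ 1 →
      ∀ S ⊆ Icc 0 T, ∫ τ in S, ‖v τ‖ ≤ B * R * T + B * 1 := fun v hv hmod S hS => by
    refine (setIntegral_norm_le_of_rhoE_le_one hΦc hpos zero_le_one hB hR hv hmod hS).trans ?_
    gcongr
    calc volume.real S ≤ volume.real (Icc 0 T) := measureReal_mono hS measure_Icc_lt_top.ne
      _ = T := by rw [Real.volume_real_Icc_of_le hT.le, sub_zero]
  refine ⟨(B * R * T + B * 1) / (T - 0) + (B * R * T + B * 1), fun n t ht => ?_⟩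
  have hun : IntegrableOn (u n) (Icc 0 T) := (hu n).continuousOn.integrableOn_Icc
  refine norm_le_of_setIntegral_norm_le hT hun (hint _ hun (hmod n) _ subset_rfl)
    (fun s hs r hr => ?_) ht
  exact ((hu n).norm_sub_le_setIntegral_uIoc hs hr).trans
    (hint _ (hu n).1 (hmod' n) _ (uIoc_subset_uIcc.trans (uIcc_subset_Icc hs hr)))

end Family

/-- Every sequence in `W^1L^Φ([0,T],ℝ^d)` that is bounded in the norm
`‖u‖_{L^Φ} + ‖u'‖_{L^Φ}` has a subsequence converging uniformly on `[0,T]` to a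
continuous function. -/
theorem statement6 {d : ℕ} (T : ℝ) (hT : 0 < T) (Φ : Ed d → ℝ) (hΦ : IsNInf Φ)
    (u u' : ℕ → ℝ → Ed d) (hu : ∀ n, MemW1Lphi T Φ (u n) (u' n))
    (C : ℝ) (hC : ∀ n, luxNorm T Φ (u n) + luxNorm T Φ (u' n) ≤ C) :
    ∃ φ : ℕ → ℕ, StrictMono φ ∧ ∃ f : ℝ → Ed d, ContinuousOn f (Icc (0:ℝ) T) ∧
      TendstoUniformlyOn (fun k => u (φ k)) f atTop (Icc (0:ℝ) T) := by
  obtain ⟨hdiff, hconv, hpos, h0, -, -, hsuper⟩ := hΦ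
  have hΦc := hdiff.continuous
  have hlux n : luxNorm T Φ (u n) < C + 1 ∧ luxNorm T Φ (u' n) < C + 1 := by
    constructor <;> linarith [hC n, luxNorm_nonneg (T := T) (Φ := Φ) (u n),
      luxNorm_nonneg (T := T) (Φ := Φ) (u' n)]
  have hB : 0 < C + 1 := (luxNorm_nonneg _).trans_lt (hlux 0).1
  have hmod n : rhoE T Φ (fun t => (C + 1)⁻¹ • u n t) ≤ 1 :=
    rhoE_inv_smul_le_one_of_luxNorm_lt hconv h0
      ⟨1, one_pos, by simpa using rhoE_lt_top_of_continuousOn hΦc (hu n).continuousOn⟩ (hlux n).1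
  have hmod' n : rhoE T Φ (fun t => (C + 1)⁻¹ • u' n t) ≤ 1 :=
    rhoE_inv_smul_le_one_of_luxNorm_lt hconv h0 (hu n).2.1.2 (hlux n).2
  obtain ⟨M, hM⟩ := exists_norm_le_of_memW1Lphi hT hΦc hpos hsuper hB hu hmod hmod'
  exact exists_subseq_tendstoUniformlyOn_of_equicontinuousOn isCompact_Icc
    (equicontinuousOn_of_memW1Lphi hΦc hpos hsuper hB hu hmod') hM
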